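/- arXiv:1601.00962 — 2 statements merged into one kernel-verified Lean document; each statement's English description precedes it below -/
import Mathlib

section
/- Let ρ be a two-qubit state with correlation matrix T, and let λ1 ≥ λ2 be the two largest eigenvalues of the real symmetric matrix T * Tᵀ. Then 2·√(λ1+λ2) is the greatest element of the set of quantities √((E(1,1)+E(2,1))² + (E(1,2)+E(2,2))²) + √((E(1,1)−E(2,1))² + (E(1,2)−E(2,2))²) taken over all quadruples of unit vectors a1, a2, b1, b2 in EuclideanSpace ℝ (Fin 3) satisfying ⟪a1, a2⟫ = 0 and ⟪b1, b2⟫ = 0, where E(m,n) := Re(trace(ρ * ((a_m·σ) ⊗ₖ (b_n·σ)))): every such quantity is at most 2·√(λ1+λ2), and some such quadruple attains this value. -/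
/-!
With `E(a, b) = ⟪Tᵀ a, b⟫`, the two square roots are the lengths of the projections of
`Tᵀ a₁ ± Tᵀ a₂` onto `span {b₁, b₂}`. Bessel's inequality and the parallelogram law bound their sum
by `2 √(‖Tᵀ a₁‖² + ‖Tᵀ a₂‖²) = 2 √(⟪T Tᵀ a₁, a₁⟫ + ⟪T Tᵀ a₂, a₂⟫)`, and Ky Fan's maximum principle
bounds the last sum by `λ₁ + λ₂`. Equality holds for eigenvectors `a₁, a₂` of `T Tᵀ` belonging to
`λ₁, λ₂`: then `Tᵀ a₁ ⟂ Tᵀ a₂` have squared lengths `λ₁, λ₂`, and `b₁, b₂` are their directions,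
completed to an orthonormal pair where `Tᵀ aᵢ = 0` (singular value decomposition of `Tᵀ`).
-/

open Matrix Polynomial
open scoped Kronecker Matrix ComplexOrder

noncomputable section

/-- Pauli matrix σ1. -/
def σ₁ : Matrix (Fin 2) (Fin 2) ℂ := !![0, 1; 1, 0]
/-- Pauli matrix σ2. -/
def σ₂ : Matrix (Fin 2) (Fin 2) ℂ := !![0, -Complex.I; Complex.I, 0]
/-- Pauli matrix σ3. -/
def σ₃ : Matrix (Fin 2) (Fin 2) ℂ := !![1, 0; 0, -1]

/-- The three Pauli matrices. -/
def pauli : Fin 3 → Matrix (Fin 2) (Fin 2) ℂ := ![σ₁, σ₂, σ₃]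

/-- `v·σ` for a real 3-vector `v`. -/
def pauliVec (v : EuclideanSpace ℝ (Fin 3)) : Matrix (Fin 2) (Fin 2) ℂ :=
  (v 0 : ℂ) • σ₁ + (v 1 : ℂ) • σ₂ + (v 2 : ℂ) • σ₃

/-- Full correlation `E = Re tr(ρ ((a·σ) ⊗ₖ (b·σ)))`. -/
def corrE (ρ : Matrix (Fin 2 × Fin 2) (Fin 2 × Fin 2) ℂ)
    (a b : EuclideanSpace ℝ (Fin 3)) : ℝ :=
  ((ρ * (pauliVec a ⊗ₖ pauliVec b)).trace).re

/-- Correlation matrix `T i j = Re tr(ρ (σᵢ ⊗ₖ σⱼ))` of a two-qubit state. -/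
def corrMatrix (ρ : Matrix (Fin 2 × Fin 2) (Fin 2 × Fin 2) ℂ) : Matrix (Fin 3) (Fin 3) ℝ :=
  fun i j => ((ρ * (pauli i ⊗ₖ pauli j)).trace).re

/-- The CHSH value `E(1,1) + E(2,1) + E(1,2) − E(2,2)` of `ρ` at `(a1,a2,b1,b2)`. -/
def CHSHval (ρ : Matrix (Fin 2 × Fin 2) (Fin 2 × Fin 2) ℂ)
    (a1 a2 b1 b2 : EuclideanSpace ℝ (Fin 3)) : ℝ :=
  corrE ρ a1 b1 + corrE ρ a2 b1 + corrE ρ a1 b2 - corrE ρ a2 b2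

/-- The real inner product on `EuclideanSpace ℝ (Fin 3)`. -/
def rip (x y : EuclideanSpace ℝ (Fin 3)) : ℝ := inner ℝ x y

/-- Action of a real 3×3 matrix on a Euclidean 3-vector. -/
def matVec (T : Matrix (Fin 3) (Fin 3) ℝ) (v : EuclideanSpace ℝ (Fin 3)) :
    EuclideanSpace ℝ (Fin 3) :=
  (EuclideanSpace.equiv (Fin 3) ℝ).symm (T.mulVec (EuclideanSpace.equiv (Fin 3) ℝ v))

/-- `b1', b2'` is the dual basis of the pair `b1, b2` inside `span{b1, b2}`:
`⟪b'_m, b_n⟫ = δ_{mn}`. -/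
def IsDualPair (b1 b2 b1' b2' : EuclideanSpace ℝ (Fin 3)) : Prop :=
  b1' ∈ Submodule.span ℝ ({b1, b2} : Set (EuclideanSpace ℝ (Fin 3))) ∧
  b2' ∈ Submodule.span ℝ ({b1, b2} : Set (EuclideanSpace ℝ (Fin 3))) ∧
  rip b1' b1 = 1 ∧ rip b1' b2 = 0 ∧ rip b2' b1 = 0 ∧ rip b2' b2 = 1

/-- The analog CHSH value of `ρ` at `(a1,a2,b1,b2)`, with `b1', b2'` the dual basis of
`b1, b2`. -/
def ACHSHval (ρ : Matrix (Fin 2 × Fin 2) (Fin 2 × Fin 2) ℂ)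
    (a1 a2 b1 b2 b1' b2' : EuclideanSpace ℝ (Fin 3)) : ℝ :=
  ‖(corrE ρ a1 b1 + corrE ρ a2 b1) • b1' + (corrE ρ a1 b2 + corrE ρ a2 b2) • b2'‖ +
  ‖(corrE ρ a1 b1 - corrE ρ a2 b1) • b1' + (corrE ρ a1 b2 - corrE ρ a2 b2) • b2'‖

/-- A family `P a m` (outcome `a`, setting `m`) of 2×2 matrices admits a finite
local-hidden-state model. -/
def HasLHSModel (P : Fin 2 → Fin 2 → Matrix (Fin 2) (Fin 2) ℂ) : Prop :=
  ∃ (N : ℕ) (τ : Fin N → Matrix (Fin 2) (Fin 2) ℂ) (q : Fin 2 → Fin 2 → Fin N → ℝ),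
    (∀ lam, (τ lam).PosSemidef) ∧
    (∀ a m lam, 0 ≤ q a m lam ∧ q a m lam ≤ 1) ∧
    (∀ m lam, q 0 m lam + q 1 m lam = 1) ∧
    (∀ a m, P a m = ∑ lam, q a m lam • τ lam)

/-- Full correlations `E m n` admit a finite LHV-LHS model with respect to Bob's
measurement vectors `b 0, b 1`. -/
def HasLHVLHSModel (E : Fin 2 → Fin 2 → ℝ) (b : Fin 2 → EuclideanSpace ℝ (Fin 3)) : Prop :=
  ∃ (N : ℕ) (p : Fin N → ℝ) (e : Fin 2 → Fin N → ℝ)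
    (ρs : Fin N → Matrix (Fin 2) (Fin 2) ℂ),
    (∀ lam, 0 ≤ p lam) ∧ (∑ lam, p lam = 1) ∧
    (∀ m lam, e m lam ∈ Set.Icc (-1 : ℝ) 1) ∧
    (∀ lam, (ρs lam).PosSemidef ∧ (ρs lam).trace = 1) ∧
    (∀ m n, E m n = ∑ lam, p lam * e m lam * ((ρs lam * pauliVec (b n)).trace).re)

/-- Full correlations `E m n` admit a finite LHV model. -/
def HasLHVModel (E : Fin 2 → Fin 2 → ℝ) : Prop :=
  ∃ (N : ℕ) (p : Fin N → ℝ) (e f : Fin 2 → Fin N → ℝ),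
    (∀ lam, 0 ≤ p lam) ∧ (∑ lam, p lam = 1) ∧
    (∀ m lam, e m lam ∈ Set.Icc (-1 : ℝ) 1) ∧
    (∀ n lam, f n lam ∈ Set.Icc (-1 : ℝ) 1) ∧
    (∀ m n, E m n = ∑ lam, p lam * e m lam * f n lam)

/-- The effect `(1/2)(I + (−1)^i v·σ)` of the projective measurement along `v`. -/
def effect (v : EuclideanSpace ℝ (Fin 3)) (i : Fin 2) : Matrix (Fin 2) (Fin 2) ℂ :=
  (1/2 : ℝ) • ((1 : Matrix (Fin 2) (Fin 2) ℂ) + ((-1 : ℝ) ^ (i : ℕ)) • pauliVec v)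

open scoped InnerProductSpace RealInnerProductSpace
open Module

section InnerProductSpace

variable {E : Type*} [NormedAddCommGroup E] [InnerProductSpace ℝ E]

lemma exists_orthonormalBasis_eq_norm_smul [FiniteDimensional ℝ E] {ι : Type*} [Fintype ι]
    (hcard : finrank ℝ E = Fintype.card ι) {w : ι → E}
    (hw : Pairwise fun i j => ⟪w i, w j⟫ = 0) :
    ∃ b : OrthonormalBasis ι ℝ E, ∀ i, w i = ‖w i‖ • b i := by
  have hs : Orthonormal ℝ ({i | w i ≠ 0}.domRestrict fun i => ‖w i‖⁻¹ • w i) := by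
    refine ⟨fun i => ?_, fun i j hij => ?_⟩
    · simp [norm_smul, inv_mul_cancel₀ (norm_ne_zero_iff.mpr i.2)]
    · simp only [Set.domRestrict_apply, real_inner_smul_left, real_inner_smul_right,
        hw (Subtype.coe_ne_coe.mpr hij), mul_zero]
  obtain ⟨b, hb⟩ := hs.exists_orthonormalBasis_extension_of_card_eq hcard
  refine ⟨b, fun i => ?_⟩
  by_cases hi : w i = 0
  · simp [hi]
  · rw [hb i hi, smul_inv_smul₀ (norm_ne_zero_iff.mpr hi)]

variable {b₁ b₂ : E}

lemma inner_sq_add_inner_sq_le_norm_sq (h₁ : ‖b₁‖ = 1) (h₂ : ‖b₂‖ = 1) (h₁₂ : ⟪b₁, b₂⟫ = 0)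
    (x : E) : ⟪x, b₁⟫ ^ 2 + ⟪x, b₂⟫ ^ 2 ≤ ‖x‖ ^ 2 := by
  have hb : Orthonormal ℝ ![b₁, b₂] := by simp [h₁, h₂, h₁₂]
  simpa only [Fin.sum_univ_two, Matrix.cons_val_zero, Matrix.cons_val_one, Real.norm_eq_abs,
    sq_abs, real_inner_comm x] using hb.sum_inner_products_le x (s := Finset.univ)

lemma sqrt_inner_sq_add_inner_sq_le_norm (h₁ : ‖b₁‖ = 1) (h₂ : ‖b₂‖ = 1) (h₁₂ : ⟪b₁, b₂⟫ = 0)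
    (x : E) : √(⟪x, b₁⟫ ^ 2 + ⟪x, b₂⟫ ^ 2) ≤ ‖x‖ :=
  (Real.sqrt_le_left (norm_nonneg x)).mpr (inner_sq_add_inner_sq_le_norm_sq h₁ h₂ h₁₂ x)

lemma norm_add_add_norm_sub_le (u w : E) : ‖u + w‖ + ‖u - w‖ ≤ 2 * √(‖u‖ ^ 2 + ‖w‖ ^ 2) := by
  have parallelogram : ‖u + w‖ ^ 2 + ‖u - w‖ ^ 2 = 2 * (‖u‖ ^ 2 + ‖w‖ ^ 2) := by
    rw [norm_add_sq_real, norm_sub_sq_real]; ring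
  refine le_of_pow_le_pow_left₀ two_ne_zero (by positivity) ?_
  rw [mul_pow, Real.sq_sqrt (by positivity)]
  linarith [add_sq_le (a := ‖u + w‖) (b := ‖u - w‖)]

/-- The analog CHSH value for orthonormal `b₁, b₂` and correlations `E(m, n) = ⟪w m, b n⟫`. -/
def chshMUB (w₁ w₂ b₁ b₂ : E) : ℝ :=
  √((⟪w₁, b₁⟫ + ⟪w₂, b₁⟫) ^ 2 + (⟪w₁, b₂⟫ + ⟪w₂, b₂⟫) ^ 2) +
    √((⟪w₁, b₁⟫ - ⟪w₂, b₁⟫) ^ 2 + (⟪w₁, b₂⟫ - ⟪w₂, b₂⟫) ^ 2)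

lemma chshMUB_le (h₁ : ‖b₁‖ = 1) (h₂ : ‖b₂‖ = 1) (h₁₂ : ⟪b₁, b₂⟫ = 0) (w₁ w₂ : E) :
    chshMUB w₁ w₂ b₁ b₂ ≤ 2 * √(‖w₁‖ ^ 2 + ‖w₂‖ ^ 2) := by
  simp only [chshMUB, ← inner_add_left, ← inner_sub_left]
  exact (add_le_add (sqrt_inner_sq_add_inner_sq_le_norm h₁ h₂ h₁₂ _)
    (sqrt_inner_sq_add_inner_sq_le_norm h₁ h₂ h₁₂ _)).trans (norm_add_add_norm_sub_le w₁ w₂)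

lemma chshMUB_eq_of_eq_norm_smul (h₁ : ‖b₁‖ = 1) (h₂ : ‖b₂‖ = 1) (h₁₂ : ⟪b₁, b₂⟫ = 0)
    {w₁ w₂ : E} (hw₁ : w₁ = ‖w₁‖ • b₁) (hw₂ : w₂ = ‖w₂‖ • b₂) :
    chshMUB w₁ w₂ b₁ b₂ = 2 * √(‖w₁‖ ^ 2 + ‖w₂‖ ^ 2) := by
  have h₂₁ : ⟪b₂, b₁⟫ = 0 := by rw [real_inner_comm, h₁₂]
  have hb₁ : ⟪b₁, b₁⟫ = 1 := by rw [real_inner_self_eq_norm_sq, h₁, one_pow]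
  have hb₂ : ⟪b₂, b₂⟫ = 1 := by rw [real_inner_self_eq_norm_sq, h₂, one_pow]
  rw [chshMUB, hw₁, hw₂]
  simp only [real_inner_smul_left, hb₁, hb₂, h₁₂, h₂₁, norm_smul, h₁, h₂, Real.norm_eq_abs,
    abs_norm]
  ring_nf

end InnerProductSpace

lemma sum_mul_le_add_of_antitone {n : ℕ} {μ p : Fin (n + 2) → ℝ} (hμ : Antitone μ)
    (hp : ∀ i, 0 ≤ p i) (hp₀ : p 0 ≤ 1) (hsum : ∑ i, p i = 2) :
    ∑ i, μ i * p i ≤ μ 0 + μ 1 := by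
  rw [Fin.sum_univ_succ] at hsum ⊢
  have htail : ∑ i : Fin (n + 1), μ i.succ * p i.succ ≤ μ 1 * (2 - p 0) := by
    rw [← hsum, add_sub_cancel_left, Finset.mul_sum]
    exact Finset.sum_le_sum fun i _ =>
      mul_le_mul_of_nonneg_right (hμ (Fin.succ_pos i)) (hp _)
  nlinarith [hμ (show (0 : Fin (n + 2)) ≤ 1 from Fin.zero_le _)]

namespace LinearMap.IsSymmetric

variable {E : Type*} [NormedAddCommGroup E] [InnerProductSpace ℝ E] [FiniteDimensional ℝ E]
  {T : E →ₗ[ℝ] E}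

lemma inner_apply_self_eq_sum (hT : T.IsSymmetric) {n : ℕ} (hn : finrank ℝ E = n) (x : E) :
    ⟪T x, x⟫ = ∑ i, hT.eigenvalues hn i * ⟪hT.eigenvectorBasis hn i, x⟫ ^ 2 := by
  rw [← (hT.eigenvectorBasis hn).sum_inner_mul_inner (T x) x]
  refine Finset.sum_congr rfl fun i _ => ?_
  rw [hT x, apply_eigenvectorBasis, real_inner_smul_right, real_inner_comm x]
  simp only [Real.ringHom_apply]
  ring

/-- Ky Fan's maximum principle for two vectors. -/
theorem inner_apply_add_inner_apply_le (hT : T.IsSymmetric) {n : ℕ} (hn : finrank ℝ E = n + 2)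
    {x₁ x₂ : E} (h₁ : ‖x₁‖ = 1) (h₂ : ‖x₂‖ = 1) (h₁₂ : ⟪x₁, x₂⟫ = 0) :
    ⟪T x₁, x₁⟫ + ⟪T x₂, x₂⟫ ≤ hT.eigenvalues hn 0 + hT.eigenvalues hn 1 := by
  set v := hT.eigenvectorBasis hn
  have parseval (x : E) : ∑ i, ⟪v i, x⟫ ^ 2 = ‖x‖ ^ 2 := by
    simpa only [Real.norm_eq_abs, sq_abs] using v.sum_sq_norm_inner_right x
  rw [hT.inner_apply_self_eq_sum, hT.inner_apply_self_eq_sum, ← Finset.sum_add_distrib]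
  simp only [← mul_add]
  refine sum_mul_le_add_of_antitone (hT.eigenvalues_antitone hn) (fun i => by positivity) ?_ ?_
  · simpa only [real_inner_comm, v.orthonormal.norm_eq_one, one_pow] using
      inner_sq_add_inner_sq_le_norm_sq h₁ h₂ h₁₂ (v 0)
  · rw [Finset.sum_add_distrib, parseval, parseval, h₁, h₂]
    norm_num

lemma eigenvalues_eq_of_charpoly_eq (hT : T.IsSymmetric) {n : ℕ} (hn : finrank ℝ E = n)
    {l : Fin n → ℝ} (hl : Antitone l) (h : T.charpoly = ∏ i, (X - C (l i))) :
    hT.eigenvalues hn = l := by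
  rw [← List.ofFn_inj, ← hT.sort_roots_charpoly_eq_eigenvalues hn, h,
    roots_prod _ _ (Finset.prod_ne_zero_iff.mpr fun i _ => X_sub_C_ne_zero (l i))]
  simp only [roots_X_sub_C, Multiset.bind_singleton, Fin.univ_val_map, RCLike.re_to_real,
    Multiset.map_coe, List.map_ofFn, ge_iff_le, Multiset.coe_sort]
  apply List.mergeSort_of_pairwise
  simp_rw [decide_eq_true_eq, ← List.sortedGE_iff_pairwise]
  exact hl.sortedGE_ofFn

end LinearMap.IsSymmetric

section Gram

variable {E : Type*} [NormedAddCommGroup E] [InnerProductSpace ℝ E] [FiniteDimensional ℝ E]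

lemma inner_adjoint_mul_self_apply (g : E →ₗ[ℝ] E) (x y : E) :
    ⟪(g.adjoint * g) x, y⟫ = ⟪g x, g y⟫ :=
  LinearMap.adjoint_inner_left g y (g x)

theorem isGreatest_chshMUB (g : E →ₗ[ℝ] E) {n : ℕ} (hn : finrank ℝ E = n + 2) :
    IsGreatest {s : ℝ | ∃ a₁ a₂ b₁ b₂ : E, ‖a₁‖ = 1 ∧ ‖a₂‖ = 1 ∧ ‖b₁‖ = 1 ∧ ‖b₂‖ = 1 ∧
        ⟪a₁, a₂⟫ = 0 ∧ ⟪b₁, b₂⟫ = 0 ∧ s = chshMUB (g a₁) (g a₂) b₁ b₂}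
      (2 * √(g.isSymmetric_adjoint_mul_self.eigenvalues hn 0 +
        g.isSymmetric_adjoint_mul_self.eigenvalues hn 1)) := by
  set hS := g.isSymmetric_adjoint_mul_self
  set μ := hS.eigenvalues hn
  set v := hS.eigenvectorBasis hn
  have hgv (i j : Fin (n + 2)) : ⟪g (v i), g (v j)⟫ = μ i * ⟪v i, v j⟫ := by
    rw [← inner_adjoint_mul_self_apply, hS.apply_eigenvectorBasis, real_inner_smul_left]
    rfl
  constructor
  · have horth : Pairwise fun i j => ⟪g (v i), g (v j)⟫ = 0 := fun i j hij => by
      simp only [hgv, v.orthonormal.inner_eq_zero hij, mul_zero]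
    have hnorm (i : Fin (n + 2)) : ‖g (v i)‖ ^ 2 = μ i := by
      rw [← real_inner_self_eq_norm_sq, hgv, real_inner_self_eq_norm_sq,
        v.orthonormal.norm_eq_one, one_pow, mul_one]
    obtain ⟨b, hb⟩ := exists_orthonormalBasis_eq_norm_smul (by simpa using hn) horth
    have hb₀₁ : ⟪b 0, b 1⟫ = 0 := b.orthonormal.inner_eq_zero (by simp)
    refine ⟨v 0, v 1, b 0, b 1, v.orthonormal.norm_eq_one 0, v.orthonormal.norm_eq_one 1,
      b.orthonormal.norm_eq_one 0, b.orthonormal.norm_eq_one 1,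
      v.orthonormal.inner_eq_zero (by simp), hb₀₁, ?_⟩
    rw [chshMUB_eq_of_eq_norm_smul (b.orthonormal.norm_eq_one 0) (b.orthonormal.norm_eq_one 1)
      hb₀₁ (hb 0) (hb 1), hnorm, hnorm]
  · rintro s ⟨a₁, a₂, b₁, b₂, ha₁, ha₂, hb₁, hb₂, ha₁₂, hb₁₂, rfl⟩
    have hKyFan : ‖g a₁‖ ^ 2 + ‖g a₂‖ ^ 2 ≤ μ 0 + μ 1 := by
      simpa only [inner_adjoint_mul_self_apply, real_inner_self_eq_norm_sq] using
        hS.inner_apply_add_inner_apply_le hn ha₁ ha₂ ha₁₂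
    calc chshMUB (g a₁) (g a₂) b₁ b₂ ≤ 2 * √(‖g a₁‖ ^ 2 + ‖g a₂‖ ^ 2) :=
          chshMUB_le hb₁ hb₂ hb₁₂ _ _
      _ ≤ 2 * √(μ 0 + μ 1) := by gcongr

end Gram

namespace Matrix

variable {n : Type*} [Fintype n] [DecidableEq n]

lemma charpoly_toEuclideanLin (A : Matrix n n ℝ) : (toEuclideanLin A).charpoly = A.charpoly := by
  rw [toEuclideanLin_eq_toLin_orthonormal, charpoly_toLin]

lemma adjoint_toEuclideanLin_transpose_mul_self (A : Matrix n n ℝ) :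
    (toEuclideanLin Aᵀ).adjoint * toEuclideanLin Aᵀ = toEuclideanLin (A * Aᵀ) := by
  rw [← toEuclideanLin_conjTranspose_eq_adjoint, conjTranspose_eq_transpose_of_trivial,
    transpose_transpose, toLpLin_mul_same, Module.End.mul_eq_comp]

end Matrix

lemma pauliVec_eq_sum (v : EuclideanSpace ℝ (Fin 3)) :
    pauliVec v = ∑ i, (v i : ℂ) • pauli i := by
  simp [pauliVec, Fin.sum_univ_three, pauli]

lemma corrE_eq_inner (ρ : Matrix (Fin 2 × Fin 2) (Fin 2 × Fin 2) ℂ)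
    (a b : EuclideanSpace ℝ (Fin 3)) :
    corrE ρ a b = ⟪toEuclideanLin (corrMatrix ρ)ᵀ a, b⟫ := by
  have hkron (A B : Matrix (Fin 2) (Fin 2) ℂ) : A ⊗ₖ B = kroneckerBilinear (R := ℂ) A B := rfl
  rw [corrE, hkron, pauliVec_eq_sum, pauliVec_eq_sum]
  simp only [map_sum, map_smul, LinearMap.sum_apply, LinearMap.smul_apply, Matrix.mul_sum,
    Matrix.mul_smul, trace_sum, trace_smul, Complex.re_sum, smul_eq_mul, Complex.re_ofReal_mul,
    ← hkron, toLpLin_apply, PiLp.inner_apply, mulVec, dotProduct, transpose_apply,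
    RCLike.inner_apply, conj_trivial, corrMatrix]
  exact Finset.sum_congr rfl fun j _ => congrArg _ (Finset.sum_congr rfl fun i _ => mul_comm _ _)

theorem achsh_mub_isGreatest_general (ρ : Matrix (Fin 2 × Fin 2) (Fin 2 × Fin 2) ℂ)
    (l1 l2 l3 : ℝ) (h12 : l2 ≤ l1) (h23 : l3 ≤ l2)
    (hchar : (corrMatrix ρ * (corrMatrix ρ)ᵀ).charpoly
      = (X - C l1) * (X - C l2) * (X - C l3)) :
    IsGreatest {s : ℝ | ∃ a1 a2 b1 b2 : EuclideanSpace ℝ (Fin 3),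
        ‖a1‖ = 1 ∧ ‖a2‖ = 1 ∧ ‖b1‖ = 1 ∧ ‖b2‖ = 1 ∧
        rip a1 a2 = 0 ∧ rip b1 b2 = 0 ∧
        s = Real.sqrt ((corrE ρ a1 b1 + corrE ρ a2 b1) ^ 2
              + (corrE ρ a1 b2 + corrE ρ a2 b2) ^ 2)
          + Real.sqrt ((corrE ρ a1 b1 - corrE ρ a2 b1) ^ 2
              + (corrE ρ a1 b2 - corrE ρ a2 b2) ^ 2)}
      (2 * Real.sqrt (l1 + l2)) := by
  have hn : finrank ℝ (EuclideanSpace ℝ (Fin 3)) = 1 + 2 := finrank_euclideanSpace_fin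
  have hμ : (toEuclideanLin (corrMatrix ρ)ᵀ).isSymmetric_adjoint_mul_self.eigenvalues hn =
      ![l1, l2, l3] := by
    refine LinearMap.IsSymmetric.eigenvalues_eq_of_charpoly_eq _ hn
      (by simp [antitone_vecCons, h12, h23]) ?_
    rw [adjoint_toEuclideanLin_transpose_mul_self, charpoly_toEuclideanLin, hchar,
      Fin.prod_univ_three]
    rfl
  have h := isGreatest_chshMUB (toEuclideanLin (corrMatrix ρ)ᵀ) hn
  rw [hμ] at h
  simpa only [chshMUB, rip, corrE_eq_inner, cons_val_zero, cons_val_one] using h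

/-- `2√(λ1+λ2)` is the greatest value of the mutually-unbiased analog CHSH
quantity `√((E11+E21)² + (E12+E22)²) + √((E11−E21)² + (E12−E22)²)` over quadruples of unit
vectors with `a1 ⟂ a2` and `b1 ⟂ b2`. -/
theorem achsh_mub_isGreatest (ρ : Matrix (Fin 2 × Fin 2) (Fin 2 × Fin 2) ℂ)
    (hρ : ρ.PosSemidef) (htr : ρ.trace = 1)
    (l1 l2 l3 : ℝ) (h12 : l2 ≤ l1) (h23 : l3 ≤ l2)
    (hchar : (corrMatrix ρ * (corrMatrix ρ)ᵀ).charpoly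
      = (X - C l1) * (X - C l2) * (X - C l3)) :
    IsGreatest {s : ℝ | ∃ a1 a2 b1 b2 : EuclideanSpace ℝ (Fin 3),
        ‖a1‖ = 1 ∧ ‖a2‖ = 1 ∧ ‖b1‖ = 1 ∧ ‖b2‖ = 1 ∧
        rip a1 a2 = 0 ∧ rip b1 b2 = 0 ∧
        s = Real.sqrt ((corrE ρ a1 b1 + corrE ρ a2 b1) ^ 2
              + (corrE ρ a1 b2 + corrE ρ a2 b2) ^ 2)
          + Real.sqrt ((corrE ρ a1 b1 - corrE ρ a2 b1) ^ 2
              + (corrE ρ a1 b2 - corrE ρ a2 b2) ^ 2)}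
      (2 * Real.sqrt (l1 + l2)) :=
  achsh_mub_isGreatest_general ρ l1 l2 l3 h12 h23 hchar
end
end

section
/- Let ρ be a two-qubit state. Then the following are equivalent: (i) there exist unit vectors a1, a2 and linearly independent unit vectors b1, b2 in EuclideanSpace ℝ (Fin 3) such that the full correlations E(m,n) := Re(trace(ρ * ((a_m·σ) ⊗ₖ (b_n·σ)))) admit no finite LHV-LHS model with respect to b1, b2; (ii) there exist unit vectors a1, a2, b1, b2 in EuclideanSpace ℝ (Fin 3) such that the full correlations E(m,n) := Re(trace(ρ * ((a_m·σ) ⊗ₖ (b_n·σ)))) admit no finite LHV model. -/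
open Matrix Polynomial
open scoped Kronecker Matrix ComplexOrder

noncomputable section

/-!
Both conditions are governed by the vectors `u m` with `corrE ρ (a m) b = ⟪u m, b⟫`, the Riesz
representatives of the linear functionals `b ↦ corrE ρ (a m) b`. If
`‖u 0 + u 1‖ + ‖u 0 - u 1‖ ≤ 2`, the correlations have an LHV-LHS model whatever Bob's vectors;
otherwise, measuring Bob along the directions of `u 0 + u 1` and `u 0 - u 1` makes the CHSH
expression equal to this sum, above the local bound 2. Conversely, an LHV-LHS model is an LHV
model, because Bob's local expectations `Re tr(ρ_λ (b·σ))` lie in `[-1, 1]`; and linearly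
dependent unit vectors satisfy `b₂ = ±b₁`, which gives a deterministic LHV model.
-/

open scoped RealInnerProductSpace

namespace Matrix

variable {n : Type*} [Fintype n] [DecidableEq n]

theorem PosSemidef.re_trace_mul_nonneg {ρ Q : Matrix n n ℂ} (hρ : ρ.PosSemidef)
    (hQ : Q.PosSemidef) : 0 ≤ (ρ * Q).trace.re := by
  open scoped MatrixOrder in
  obtain ⟨B, rfl⟩ := CStarAlgebra.nonneg_iff_eq_star_mul_self.mp hQ.nonneg
  rw [star_eq_conjTranspose, ← Matrix.mul_assoc, trace_mul_cycle]
  exact (Complex.nonneg_iff.mp (hρ.mul_mul_conjTranspose_same B).trace_nonneg).1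

/-- The identity `2 (1 + X) = (1 + X)ᴴ (1 + X) + (1 - t) 1` exhibits `1 + X` as positive. -/
theorem IsHermitian.posSemidef_one_add {X : Matrix n n ℂ} (hX : X.IsHermitian) {t : ℝ}
    (hXX : X * X = (t : ℂ) • 1) (ht : t ≤ 1) : (1 + X).PosSemidef := by
  have hsq : (1 + X)ᴴ * (1 + X) = (2 : ℂ) • (1 + X) - ((1 - t : ℝ) : ℂ) • 1 := by
    rw [conjTranspose_add, conjTranspose_one, hX.eq, add_mul, mul_add, mul_add, hXX, one_mul,
      mul_one, one_mul]
    push_cast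
    module
  have hpos : ((1 - t : ℝ) : ℂ) • (1 : Matrix n n ℂ) |>.PosSemidef :=
    PosSemidef.one.smul (by exact_mod_cast sub_nonneg.mpr ht)
  have h := ((posSemidef_conjTranspose_mul_self (1 + X)).add hpos).smul
    (show (0 : ℂ) ≤ 1 / 2 by positivity)
  convert h using 1
  rw [hsq]
  module

theorem PosSemidef.abs_re_trace_mul_le {ρ X : Matrix n n ℂ} (hρ : ρ.PosSemidef)
    (hX : X.IsHermitian) {t : ℝ} (hXX : X * X = (t : ℂ) • 1) (ht : t ≤ 1) :
    |(ρ * X).trace.re| ≤ ρ.trace.re := by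
  have hplus := hρ.re_trace_mul_nonneg (hX.posSemidef_one_add hXX ht)
  have hminus := hρ.re_trace_mul_nonneg (hX.neg.posSemidef_one_add (by simpa using hXX) ht)
  simp only [mul_add, mul_one, mul_neg, trace_add, trace_neg, Complex.add_re,
    Complex.neg_re] at hplus hminus
  exact abs_le.mpr ⟨by linarith, by linarith⟩

end Matrix

theorem pauliVec_isHermitian (v : EuclideanSpace ℝ (Fin 3)) : (pauliVec v).IsHermitian := by
  ext i j
  fin_cases i <;> fin_cases j <;>
    simp [pauliVec, σ₁, σ₂, σ₃, Matrix.conjTranspose_apply]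

theorem pauliVec_mul_self (v : EuclideanSpace ℝ (Fin 3)) :
    pauliVec v * pauliVec v = ((‖v‖ ^ 2 : ℝ) : ℂ) • 1 := by
  rw [EuclideanSpace.norm_sq_eq, Fin.sum_univ_three]
  ext i j
  fin_cases i <;> fin_cases j <;>
    simp [pauliVec, σ₁, σ₂, σ₃, Matrix.mul_apply, Complex.ext_iff, sq] <;>
      first | ring1 | exact ⟨by ring, by ring⟩

theorem trace_pauliVec (v : EuclideanSpace ℝ (Fin 3)) : (pauliVec v).trace = 0 := by
  simp [pauliVec, σ₁, σ₂, σ₃, Matrix.trace_fin_two]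

theorem trace_pauliVec_mul_pauliVec (v w : EuclideanSpace ℝ (Fin 3)) :
    (pauliVec v * pauliVec w).trace = ((2 * ⟪v, w⟫ : ℝ) : ℂ) := by
  simp [pauliVec, σ₁, σ₂, σ₃, Matrix.trace_fin_two, PiLp.inner_apply, Fin.sum_univ_three,
    Complex.ext_iff]
  constructor <;> ring

theorem pauliVec_add (v w : EuclideanSpace ℝ (Fin 3)) :
    pauliVec (v + w) = pauliVec v + pauliVec w := by
  simp only [pauliVec, PiLp.add_apply, Complex.ofReal_add, add_smul]
  abel

theorem pauliVec_smul (r : ℝ) (v : EuclideanSpace ℝ (Fin 3)) :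
    pauliVec (r • v) = (r : ℂ) • pauliVec v := by
  simp only [pauliVec, PiLp.smul_apply, smul_eq_mul, Complex.ofReal_mul, smul_add, smul_smul]

def blochState (w : EuclideanSpace ℝ (Fin 3)) : Matrix (Fin 2) (Fin 2) ℂ :=
  (1 / 2 : ℂ) • (1 + pauliVec w)

theorem trace_blochState (w : EuclideanSpace ℝ (Fin 3)) : (blochState w).trace = 1 := by
  simp [blochState, Matrix.trace_add, trace_pauliVec]

theorem blochState_posSemidef {w : EuclideanSpace ℝ (Fin 3)} (hw : ‖w‖ ≤ 1) :
    (blochState w).PosSemidef := by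
  refine ((pauliVec_isHermitian w).posSemidef_one_add (pauliVec_mul_self w) ?_).smul
    (by positivity)
  nlinarith [norm_nonneg w]

theorem re_trace_blochState_mul_pauliVec (w b : EuclideanSpace ℝ (Fin 3)) :
    ((blochState w * pauliVec b).trace).re = ⟪w, b⟫ := by
  simp [blochState, Matrix.add_mul, Matrix.trace_add, trace_pauliVec,
    trace_pauliVec_mul_pauliVec]

theorem exists_inner_eq_corrE (ρ : Matrix (Fin 2 × Fin 2) (Fin 2 × Fin 2) ℂ)
    (a : EuclideanSpace ℝ (Fin 3)) : ∃ u, ∀ b, corrE ρ a b = ⟪u, b⟫ := by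
  let f : EuclideanSpace ℝ (Fin 3) →ₗ[ℝ] ℝ :=
    { toFun := corrE ρ a
      map_add' v w := by
        simp [corrE, pauliVec_add, Matrix.kronecker_add, Matrix.mul_add, Matrix.trace_add]
      map_smul' r v := by
        simp [corrE, pauliVec_smul, Matrix.kronecker_smul, Matrix.trace_smul] }
  exact ⟨(InnerProductSpace.toDual ℝ _).symm (LinearMap.toContinuousLinearMap f),
    fun b => by rw [InnerProductSpace.toDual_symm_apply]; rfl⟩

theorem abs_corrE_le_one {ρ : Matrix (Fin 2 × Fin 2) (Fin 2 × Fin 2) ℂ} (hρ : ρ.PosSemidef)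
    (htr : ρ.trace = 1) {a b : EuclideanSpace ℝ (Fin 3)} (ha : ‖a‖ ≤ 1) (hb : ‖b‖ ≤ 1) :
    |corrE ρ a b| ≤ 1 := by
  have hX : (pauliVec a ⊗ₖ pauliVec b).IsHermitian := by
    rw [Matrix.IsHermitian, Matrix.conjTranspose_kronecker, (pauliVec_isHermitian a).eq,
      (pauliVec_isHermitian b).eq]
  have hXX : (pauliVec a ⊗ₖ pauliVec b) * (pauliVec a ⊗ₖ pauliVec b) =
      ((‖a‖ ^ 2 * ‖b‖ ^ 2 : ℝ) : ℂ) • 1 := by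
    rw [← Matrix.mul_kronecker_mul, pauliVec_mul_self, pauliVec_mul_self,
      Matrix.smul_kronecker, Matrix.kronecker_smul, Matrix.one_kronecker_one, smul_smul]
    push_cast
    ring_nf
  have h := hρ.abs_re_trace_mul_le hX hXX
    (mul_le_one₀ (pow_le_one₀ (norm_nonneg a) ha) (by positivity) (pow_le_one₀ (norm_nonneg b) hb))
  rwa [htr, Complex.one_re] at h

theorem chsh_le_two_of_mem_Icc {e₀ e₁ f₀ f₁ : ℝ} (he₀ : e₀ ∈ Set.Icc (-1 : ℝ) 1)
    (he₁ : e₁ ∈ Set.Icc (-1 : ℝ) 1) (hf₀ : f₀ ∈ Set.Icc (-1 : ℝ) 1)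
    (hf₁ : f₁ ∈ Set.Icc (-1 : ℝ) 1) : e₀ * f₀ + e₁ * f₀ + e₀ * f₁ - e₁ * f₁ ≤ 2 := by
  obtain ⟨_, _⟩ := he₀; obtain ⟨_, _⟩ := he₁; obtain ⟨_, _⟩ := hf₀; obtain ⟨_, _⟩ := hf₁
  rcases le_total 0 (f₀ + f₁) with hs | hs <;> rcases le_total 0 (f₀ - f₁) with hd | hd <;>
    nlinarith

theorem HasLHVModel.chsh_le_two {E : Fin 2 → Fin 2 → ℝ} (h : HasLHVModel E) :
    E 0 0 + E 1 0 + E 0 1 - E 1 1 ≤ 2 := by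
  obtain ⟨N, p, e, f, hp, hp_sum, he, hf, hE⟩ := h
  calc E 0 0 + E 1 0 + E 0 1 - E 1 1
      = ∑ lam, p lam * (e 0 lam * f 0 lam + e 1 lam * f 0 lam + e 0 lam * f 1 lam
          - e 1 lam * f 1 lam) := by
        simp only [hE, mul_add, mul_sub, ← mul_assoc, Finset.sum_add_distrib,
          Finset.sum_sub_distrib]
    _ ≤ ∑ lam, p lam * 2 := Finset.sum_le_sum fun lam _ =>
        mul_le_mul_of_nonneg_left (chsh_le_two_of_mem_Icc (he 0 lam) (he 1 lam) (hf 0 lam)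
          (hf 1 lam)) (hp lam)
    _ = 2 := by rw [← Finset.sum_mul, hp_sum, one_mul]

theorem HasLHVLHSModel.hasLHVModel {E : Fin 2 → Fin 2 → ℝ}
    {b : Fin 2 → EuclideanSpace ℝ (Fin 3)} (hb : ∀ n, ‖b n‖ ≤ 1) (h : HasLHVLHSModel E b) :
    HasLHVModel E := by
  obtain ⟨N, p, e, ρs, hp, hp_sum, he, hρs, hE⟩ := h
  refine ⟨N, p, e, fun n lam => ((ρs lam * pauliVec (b n)).trace).re, hp, hp_sum, he,
    fun n lam => ?_, hE⟩
  have h := (hρs lam).1.abs_re_trace_mul_le (pauliVec_isHermitian (b n)) (pauliVec_mul_self (b n))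
    (pow_le_one₀ (norm_nonneg _) (hb n))
  rw [(hρs lam).2, Complex.one_re] at h
  exact abs_le.mp h

theorem hasLHVModel_of_forall_eq_mul {E : Fin 2 → Fin 2 → ℝ} {c : ℝ} (hc : |c| ≤ 1)
    (hE₀ : ∀ m, |E m 0| ≤ 1) (hE₁ : ∀ m, E m 1 = c * E m 0) : HasLHVModel E := by
  refine ⟨1, fun _ => 1, fun m _ => E m 0, fun n _ => ![1, c] n, fun _ => zero_le_one,
    by simp, fun m _ => abs_le.mp (hE₀ m), fun n _ => ?_, fun m n => ?_⟩ <;>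
    fin_cases n
  · norm_num
  · exact abs_le.mp hc
  · simp
  · simp [hE₁, mul_comm]

theorem hasLHVModel_corrE_of_not_linearIndependent
    {ρ : Matrix (Fin 2 × Fin 2) (Fin 2 × Fin 2) ℂ} (hρ : ρ.PosSemidef) (htr : ρ.trace = 1)
    {a : Fin 2 → EuclideanSpace ℝ (Fin 3)} {b₁ b₂ : EuclideanSpace ℝ (Fin 3)}
    (ha : ∀ m, ‖a m‖ ≤ 1) (hb₁ : ‖b₁‖ = 1) (hb₂ : ‖b₂‖ ≤ 1)
    (h : ¬ LinearIndependent ℝ ![b₁, b₂]) :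
    HasLHVModel (fun m n => corrE ρ (a m) (![b₁, b₂] n)) := by
  have hb₁0 : b₁ ≠ 0 := by rintro rfl; simp at hb₁
  obtain ⟨c, rfl⟩ : ∃ c : ℝ, c • b₁ = b₂ := by
    simpa [LinearIndependent.pair_iff' hb₁0] using h
  refine hasLHVModel_of_forall_eq_mul (c := c) ?_ (fun m => abs_corrE_le_one hρ htr (ha m) hb₁.le)
    fun m => ?_
  · simpa [norm_smul, hb₁] using hb₂
  · obtain ⟨u, hu⟩ := exists_inner_eq_corrE ρ (a m)
    simp [hu, real_inner_smul_right]

section InnerProduct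

variable {F : Type*} [NormedAddCommGroup F] [InnerProductSpace ℝ F]

theorem exists_norm_eq_one_inner_eq_norm [Nontrivial F] (v : F) :
    ∃ c : F, ‖c‖ = 1 ∧ ⟪v, c⟫ = ‖v‖ := by
  rcases eq_or_ne v 0 with rfl | hv
  · simpa using exists_norm_eq F zero_le_one
  · refine ⟨‖v‖⁻¹ • v, norm_smul_inv_norm hv, ?_⟩
    rw [real_inner_smul_right, real_inner_self_eq_norm_sq]
    field_simp

theorem exists_not_hasLHVModel_inner [Nontrivial F] (u : Fin 2 → F)
    (h : 2 < ‖u 0 + u 1‖ + ‖u 0 - u 1‖) :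
    ∃ c₁ c₂ : F, ‖c₁‖ = 1 ∧ ‖c₂‖ = 1 ∧ ¬ HasLHVModel (fun m n => ⟪u m, ![c₁, c₂] n⟫) := by
  obtain ⟨c₁, hc₁, hs⟩ := exists_norm_eq_one_inner_eq_norm (u 0 + u 1)
  obtain ⟨c₂, hc₂, hd⟩ := exists_norm_eq_one_inner_eq_norm (u 0 - u 1)
  refine ⟨c₁, c₂, hc₁, hc₂, fun hLHV => ?_⟩
  have hchsh := hLHV.chsh_le_two
  simp only [Matrix.cons_val_zero, Matrix.cons_val_one] at hchsh
  rw [inner_add_left] at hs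
  rw [inner_sub_left] at hd
  linarith

theorem norm_inv_smul_le_one_of_norm_le {v : F} {r : ℝ} (hv : ‖v‖ ≤ r) : ‖r⁻¹ • v‖ ≤ 1 := by
  rcases (norm_nonneg v).trans hv |>.eq_or_lt with rfl | hr
  · simp
  · rwa [norm_smul, norm_inv, Real.norm_of_nonneg hr.le, inv_mul_le_one₀ hr]

theorem mul_inner_inv_smul_of_norm_le {v : F} {r : ℝ} (hv : ‖v‖ ≤ r) (x : F) :
    r * ⟪r⁻¹ • v, x⟫ = ⟪v, x⟫ := by
  rcases eq_or_ne r 0 with rfl | hr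
  · simp [norm_le_zero_iff.mp hv]
  · rw [real_inner_smul_left, mul_inv_cancel_left₀ hr]

end InnerProduct

/-- With `s = u₀ + u₁` and `d = u₀ - u₁`, the hidden states are the Bloch states of
`s / ‖s‖` and `d / (2 - ‖s‖)`, with weights `‖s‖ / 2` and `1 - ‖s‖ / 2`; the norm condition
makes the second Bloch vector have length at most one, and `0⁻¹ = 0` covers the cases
`s = 0` and `‖s‖ = 2`. -/
theorem hasLHVLHSModel_inner (u b : Fin 2 → EuclideanSpace ℝ (Fin 3))
    (h : ‖u 0 + u 1‖ + ‖u 0 - u 1‖ ≤ 2) : HasLHVLHSModel (fun m n => ⟪u m, b n⟫) b := by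
  set s := u 0 + u 1
  set d := u 0 - u 1
  have hd_le : ‖d‖ ≤ 2 - ‖s‖ := by linarith
  set w := ![‖s‖⁻¹ • s, (2 - ‖s‖)⁻¹ • d]
  have hw : ∀ lam, ‖w lam‖ ≤ 1 := by
    intro lam
    fin_cases lam
    · exact norm_inv_smul_le_one_of_norm_le le_rfl
    · exact norm_inv_smul_le_one_of_norm_le hd_le
  refine ⟨2, ![‖s‖ / 2, (2 - ‖s‖) / 2], ![![1, 1], ![1, -1]], fun lam => blochState (w lam),
    ?_, ?_, ?_, fun lam => ⟨blochState_posSemidef (hw lam), trace_blochState _⟩, fun m n => ?_⟩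
  · intro lam; fin_cases lam <;> simp <;> linarith [norm_nonneg s, norm_nonneg d]
  · simp [Fin.sum_univ_two]; ring
  · intro m lam; fin_cases m <;> fin_cases lam <;> norm_num
  · have hs := mul_inner_inv_smul_of_norm_le (le_refl ‖s‖) (b n)
    have hd := mul_inner_inv_smul_of_norm_le hd_le (b n)
    have hu0 : ⟪u 0, b n⟫ = (⟪s, b n⟫ + ⟪d, b n⟫) / 2 := by
      simp only [s, d, inner_add_left, inner_sub_left]; ring
    have hu1 : ⟪u 1, b n⟫ = (⟪s, b n⟫ - ⟪d, b n⟫) / 2 := by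
      simp only [s, d, inner_add_left, inner_sub_left]; ring
    fin_cases m
    · simp [Fin.sum_univ_two, re_trace_blochState_mul_pauliVec, w, hu0]
      linear_combination -(hs + hd) / 2
    · simp [Fin.sum_univ_two, re_trace_blochState_mul_pauliVec, w, hu1]
      linear_combination (hd - hs) / 2

/-- a two-qubit state `ρ` can generate full correlations with no finite
LHV-LHS model (for some unit `a1, a2` and linearly independent unit `b1, b2`) iff it can
generate full correlations with no finite LHV model. -/
theorem epr_nonlocal_iff_bell_nonlocal (ρ : Matrix (Fin 2 × Fin 2) (Fin 2 × Fin 2) ℂ)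
    (hρ : ρ.PosSemidef) (htr : ρ.trace = 1) :
    (∃ a1 a2 b1 b2 : EuclideanSpace ℝ (Fin 3),
      ‖a1‖ = 1 ∧ ‖a2‖ = 1 ∧ ‖b1‖ = 1 ∧ ‖b2‖ = 1 ∧
      LinearIndependent ℝ ![b1, b2] ∧
      ¬ HasLHVLHSModel (fun m n => corrE ρ (![a1, a2] m) (![b1, b2] n)) ![b1, b2]) ↔
    (∃ a1 a2 b1 b2 : EuclideanSpace ℝ (Fin 3),
      ‖a1‖ = 1 ∧ ‖a2‖ = 1 ∧ ‖b1‖ = 1 ∧ ‖b2‖ = 1 ∧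
      ¬ HasLHVModel (fun m n => corrE ρ (![a1, a2] m) (![b1, b2] n))) := by
  constructor
  · rintro ⟨a1, a2, b1, b2, ha1, ha2, -, -, -, hN⟩
    choose u hu using fun m => exists_inner_eq_corrE ρ (![a1, a2] m)
    have hE (b : Fin 2 → EuclideanSpace ℝ (Fin 3)) :
        (fun m n => corrE ρ (![a1, a2] m) (b n)) = fun m n => ⟪u m, b n⟫ := by
      funext m n; exact hu m (b n)
    have h2 : 2 < ‖u 0 + u 1‖ + ‖u 0 - u 1‖ := by
      by_contra! h
      exact hN (hE ![b1, b2] ▸ hasLHVLHSModel_inner u _ h)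
    obtain ⟨c1, c2, hc1, hc2, hc⟩ := exists_not_hasLHVModel_inner u h2
    exact ⟨a1, a2, c1, c2, ha1, ha2, hc1, hc2, hE ![c1, c2] ▸ hc⟩
  · rintro ⟨a1, a2, b1, b2, ha1, ha2, hb1, hb2, hN⟩
    by_cases hLI : LinearIndependent ℝ ![b1, b2]
    · have hb : ∀ n, ‖![b1, b2] n‖ ≤ 1 := by intro n; fin_cases n <;> simp [hb1, hb2]
      exact ⟨a1, a2, b1, b2, ha1, ha2, hb1, hb2, hLI, fun h => hN (h.hasLHVModel hb)⟩
    · have ha : ∀ m, ‖![a1, a2] m‖ ≤ 1 := by intro m; fin_cases m <;> simp [ha1, ha2]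
      exact absurd (hasLHVModel_corrE_of_not_linearIndependent hρ htr ha hb1 hb2.le hLI) hN

end
end
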